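/- For the function h(I₁,I₂,I₃,I₄) = I₂⁵/5 + I₁³/3 − I₁²/2 + I₁I₂/2 − I₃²/2 − I₄, every vector v ∈ ℝ⁴ with v ≠ 0 satisfying h¹[v] = 0, h²[v,v] = 0, and h³[v,v,v] = 0 at the origin is of the form v = (0, v₂, 0, 0) with v₂ ≠ 0. -/

import Mathlib

/-!
On the line through `v`, `t ↦ h (t • v)` is a polynomial in `t`, and `hᵏ[v,…,v]` is `k!` times its
`k`-th coefficient. This gives `h¹[v] = -v 3`, `h²[v,v] = v 0 * v 1 - v 0 ^ 2 - v 2 ^ 2` and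
`h³[v,v,v] = 2 * v 0 ^ 3`, so three-jet degeneracy forces `v 0 = 0`, then `v 2 = 0`, and `v 3 = 0`.
-/

noncomputable def h : (Fin 4 → ℝ) → ℝ :=
  fun I => (I 1) ^ 5 / 5 + (I 0) ^ 3 / 3 - (I 0) ^ 2 / 2
    + (I 0) * (I 1) / 2 - (I 2) ^ 2 / 2 - I 3

open Polynomial Nat

section IteratedDerivAlongLine

variable {𝕜 E F : Type*} [NontriviallyNormedField 𝕜] [NormedAddCommGroup E] [NormedSpace 𝕜 E]
  [NormedAddCommGroup F] [NormedSpace 𝕜 F]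

theorem iteratedFDeriv_apply_const_eq_iteratedDeriv {n : WithTop ℕ∞} {f : E → F}
    (hf : ContDiff 𝕜 n f) (x v : E) {k : ℕ} (hk : k ≤ n) :
    iteratedFDeriv 𝕜 k f x (fun _ => v) = iteratedDeriv k (fun t : 𝕜 => f (x + t • v)) 0 := by
  have hshift : ContDiff 𝕜 n fun y => f (x + y) := hf.comp (contDiff_const.add contDiff_id)
  have := (ContinuousLinearMap.toSpanSingleton 𝕜 v).iteratedFDeriv_comp_right hshift 0 hk
  rw [iteratedDeriv_eq_iteratedFDeriv]
  change _ = iteratedFDeriv 𝕜 k ((fun y => f (x + y)) ∘ ContinuousLinearMap.toSpanSingleton 𝕜 v) 0 _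
  rw [this]
  simp [iteratedFDeriv_comp_add_left']

theorem Polynomial.iteratedDeriv_eval (p : 𝕜[X]) (k : ℕ) :
    iteratedDeriv k (fun t => p.eval t) = fun t => (derivative^[k] p).eval t := by
  induction k with
  | zero => simp
  | succ k ih =>
    rw [iteratedDeriv_succ, ih]
    funext t
    rw [Function.iterate_succ_apply']
    exact Polynomial.deriv _

theorem Polynomial.iteratedDeriv_eval_zero (p : 𝕜[X]) (k : ℕ) :
    iteratedDeriv k (fun t => p.eval t) 0 = k ! * p.coeff k := by
  rw [congrFun (p.iteratedDeriv_eval k) 0, ← coeff_zero_eq_eval_zero, coeff_iterate_derivative,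
    zero_add, descFactorial_self, nsmul_eq_mul]

end IteratedDerivAlongLine

noncomputable def hAlongLine (v : Fin 4 → ℝ) : ℝ[X] :=
  C (v 1 ^ 5 / 5) * X ^ 5 + C (v 0 ^ 3 / 3) * X ^ 3
    + C ((v 0 * v 1 - v 0 ^ 2 - v 2 ^ 2) / 2) * X ^ 2 - C (v 3) * X

theorem h_smul_eq_eval (v : Fin 4 → ℝ) (t : ℝ) : h (t • v) = (hAlongLine v).eval t := by
  simp only [h, hAlongLine, Pi.smul_apply, smul_eq_mul, eval_sub, eval_add, eval_mul, eval_C,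
    eval_pow, eval_X]
  ring

theorem contDiff_h : ContDiff ℝ ⊤ h := by
  unfold h
  fun_prop

theorem iteratedFDeriv_h_zero_apply_const (k : ℕ) (v : Fin 4 → ℝ) :
    iteratedFDeriv ℝ k h 0 (fun _ => v) = k ! * (hAlongLine v).coeff k := by
  rw [iteratedFDeriv_apply_const_eq_iteratedDeriv contDiff_h 0 v le_top]
  simp only [zero_add, h_smul_eq_eval]
  exact iteratedDeriv_eval_zero _ k

theorem fderiv_h_zero_apply (v : Fin 4 → ℝ) : fderiv ℝ h 0 v = -v 3 := by
  rw [← iteratedFDeriv_one_apply (fun _ => v), iteratedFDeriv_h_zero_apply_const]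
  simp [hAlongLine, coeff_X_pow]

theorem iteratedFDeriv_two_h_zero_apply (v : Fin 4 → ℝ) :
    iteratedFDeriv ℝ 2 h 0 ![v, v] = v 0 * v 1 - v 0 ^ 2 - v 2 ^ 2 := by
  rw [Matrix.vec_single_eq_const, Matrix.vecCons_const, iteratedFDeriv_h_zero_apply_const]
  simp [hAlongLine, coeff_X_pow]
  ring

theorem iteratedFDeriv_three_h_zero_apply (v : Fin 4 → ℝ) :
    iteratedFDeriv ℝ 3 h 0 ![v, v, v] = 2 * v 0 ^ 3 := by
  rw [Matrix.vec_single_eq_const, Matrix.vecCons_const, Matrix.vecCons_const,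
    iteratedFDeriv_h_zero_apply_const]
  simp [hAlongLine, coeff_X_pow]
  ring

/-- Every nonzero `v` on which `h` is three-jet degenerate at the origin has the
form `v = (0, v₂, 0, 0)` with `v₂ ≠ 0`. -/
theorem three_jet_degenerate_directions :
    ∀ v : Fin 4 → ℝ, v ≠ 0 →
      fderiv ℝ h 0 v = 0 →
      iteratedFDeriv ℝ 2 h 0 ![v, v] = 0 →
      iteratedFDeriv ℝ 3 h 0 ![v, v, v] = 0 →
      ∃ v₂ : ℝ, v₂ ≠ 0 ∧ v = ![0, v₂, 0, 0] := by
  intro v hv h1 h2 h3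
  rw [fderiv_h_zero_apply] at h1
  rw [iteratedFDeriv_two_h_zero_apply] at h2
  rw [iteratedFDeriv_three_h_zero_apply] at h3
  have hv0 : v 0 = 0 := by simpa using h3
  have hv2 : v 2 = 0 := by simpa [hv0] using h2
  have hv3 : v 3 = 0 := neg_eq_zero.mp h1
  have hv_eq : v = ![0, v 1, 0, 0] := by
    ext i
    fin_cases i <;> simp [hv0, hv2, hv3]
  refine ⟨v 1, fun hv1 => hv ?_, hv_eq⟩
  rw [hv_eq, hv1]
  ext i
  fin_cases i <;> rfl
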